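/- arXiv:1309.4800 — 7 statements merged into one kernel-verified Lean document; each statement's English description precedes it below -/
import Mathlib

section
/- Let Ω ⊆ ℂ be a domain, c ∈ Ω, and φ a weight on Ω that is bounded in a neighborhood of c (and such that the relevant weighted Bergman spaces admit reproducing kernels with K_φ(c,c) ≠ 0). Then K_{|z−c|²φ}(z,w) = K_φ(z,w)/((z−c)(conj(w)−conj(c))) − K_φ(z,c)·K_φ(c,w)/((z−c)(conj(w)−conj(c))·K_φ(c,c)), where the apparent singularities at z = c and w = c are removable. -/
open MeasureTheory Complex Filter ComplexConjugate

/-- Membership in the weighted Bergman space `A²_φ(Ω)`. -/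
def MemA2 (Ω : Set ℂ) (φ : ℂ → ℝ) (f : ℂ → ℂ) : Prop :=
  DifferentiableOn ℂ f Ω ∧
    MeasureTheory.IntegrableOn (fun z => ‖f z‖ ^ 2 * φ z) Ω

/-- `K` is the weighted Bergman kernel of `Ω` with weight `φ`. -/
def IsBergmanKernel (Ω : Set ℂ) (φ : ℂ → ℝ) (K : ℂ → ℂ → ℂ) : Prop :=
  (∀ w ∈ Ω, MemA2 Ω φ (fun z => K z w)) ∧
  (∀ z ∈ Ω, ∀ w ∈ Ω, K z w = conj (K w z)) ∧
  (∀ f, MemA2 Ω φ f → ∀ z ∈ Ω, f z = ∫ w in Ω, f w * K z w * ((φ w : ℝ) : ℂ))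

lemma aux_pair_aesm {Ω : Set ℂ} (hΩ : MeasurableSet Ω) {φ : ℂ → ℝ}
    {f g : ℂ → ℂ} (hf : ContinuousOn f Ω) (hg : ContinuousOn g Ω)
    (hm : AEStronglyMeasurable (fun w => ‖g w‖ ^ 2 * φ w) (volume.restrict Ω)) :
    AEStronglyMeasurable (fun w => f w * conj (g w) * ((φ w : ℝ) : ℂ)) (volume.restrict Ω) := by
  have hfm : AEMeasurable f (volume.restrict Ω) := hf.aemeasurable hΩ
  have hgm : AEMeasurable g (volume.restrict Ω) := hg.aemeasurable hΩ
  have hq : AEMeasurable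
      (fun w => f w * conj (g w) * (((‖g w‖ ^ 2)⁻¹ : ℝ) : ℂ))
      (volume.restrict Ω) := by
    refine (hfm.mul (Complex.continuous_conj.measurable.comp_aemeasurable hgm)).mul ?_
    refine Complex.measurable_ofReal.comp_aemeasurable ?_
    exact ((hgm.norm.pow_const 2).inv)
  have heq : (fun w => f w * conj (g w) * ((φ w : ℝ) : ℂ)) =
      fun w => (f w * conj (g w) * (((‖g w‖ ^ 2)⁻¹ : ℝ) : ℂ)) *
        ((‖g w‖ ^ 2 * φ w : ℝ) : ℂ) := by
    funext w
    by_cases h : g w = 0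
    · simp [h]
    · have h2 : (‖g w‖ : ℝ) ^ 2 ≠ 0 := pow_ne_zero _ (norm_ne_zero_iff.mpr h)
      have h2' : ((‖g w‖ ^ 2 : ℝ) : ℂ) ≠ 0 := by exact_mod_cast h2
      have hkey : (((‖g w‖ ^ 2)⁻¹ : ℝ) : ℂ) * ((‖g w‖ ^ 2 * φ w : ℝ) : ℂ)
          = ((φ w : ℝ) : ℂ) := by
        rw [Complex.ofReal_mul, ← mul_assoc, Complex.ofReal_inv, inv_mul_cancel₀ h2', one_mul]
      rw [mul_assoc (f w * (starRingEnd ℂ) (g w)), hkey, mul_assoc]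
  rw [heq]
  exact (hq.mul (Complex.measurable_ofReal.comp_aemeasurable hm.aemeasurable)).aestronglyMeasurable

lemma aux_pair_int {Ω : Set ℂ} (hΩ : MeasurableSet Ω) {φ : ℂ → ℝ} (hφ : ∀ z, 0 ≤ φ z)
    {f g : ℂ → ℂ} (hf : MemA2 Ω φ f) (hg : MemA2 Ω φ g) :
    IntegrableOn (fun w => f w * conj (g w) * ((φ w : ℝ) : ℂ)) Ω := by
  have hbound : IntegrableOn
      (fun w => (‖f w‖ ^ 2 * φ w + ‖g w‖ ^ 2 * φ w) / 2) Ω :=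
    (hf.2.add hg.2).div_const 2
  have hmeas := aux_pair_aesm hΩ hf.1.continuousOn hg.1.continuousOn hg.2.aestronglyMeasurable
  refine hbound.mono' hmeas ?_
  filter_upwards with w
  have hn : ‖f w * conj (g w) * ((φ w : ℝ) : ℂ)‖ =
      ‖f w‖ * ‖g w‖ * φ w := by
    rw [norm_mul, norm_mul,
      Complex.norm_conj, Complex.norm_real, Real.norm_eq_abs, _root_.abs_of_nonneg (hφ w)]
  rw [hn]
  set a := ‖f w‖
  set b := ‖g w‖
  have key : 0 ≤ (a - b) ^ 2 * φ w := mul_nonneg (sq_nonneg _) (hφ w)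
  have key2 : (a - b) ^ 2 * φ w = a ^ 2 * φ w + b ^ 2 * φ w - 2 * (a * b * φ w) := by ring
  linarith

lemma aux_combo_int {Ω : Set ℂ} (hΩ : MeasurableSet Ω) {φ : ℂ → ℝ} (hφ : ∀ z, 0 ≤ φ z)
    {f g : ℂ → ℂ} (hf : MemA2 Ω φ f) (hg : MemA2 Ω φ g) (β : ℂ) :
    IntegrableOn (fun ζ => ‖f ζ - β * g ζ‖ ^ 2 * φ ζ) Ω := by
  have key : (fun ζ => ‖f ζ - β * g ζ‖ ^ 2 * φ ζ) = fun ζ =>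
      (‖f ζ‖ ^ 2 * φ ζ + Complex.normSq β * (‖g ζ‖ ^ 2 * φ ζ))
        - 2 * ((conj β * (f ζ * conj (g ζ) * ((φ ζ : ℝ) : ℂ))).re) := by
    funext ζ
    have hre : ∀ (z : ℂ) (r : ℝ), (z * (r : ℂ)).re = z.re * r := by
      intro z r; simp [Complex.mul_re]
    have h1 : (conj β * (f ζ * conj (g ζ) * ((φ ζ : ℝ) : ℂ))).re
        = (f ζ * conj (β * g ζ)).re * φ ζ := by
      rw [show conj β * (f ζ * conj (g ζ) * ((φ ζ : ℝ) : ℂ))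
        = (f ζ * conj (β * g ζ)) * ((φ ζ : ℝ) : ℂ) by rw [map_mul]; ring, hre]
    rw [h1, Complex.sq_norm, Complex.sq_norm, Complex.sq_norm, Complex.normSq_sub,
      Complex.normSq_mul]
    ring
  rw [key]
  exact (hf.2.add (hg.2.const_mul _)).sub
    (((aux_pair_int hΩ hφ hf hg).const_mul (conj β)).re.const_mul 2)

set_option maxHeartbeats 1000000 in
theorem stmt_3 (Ω : Set ℂ) (hΩ : IsOpen Ω) (hconn : IsConnected Ω)
    (c : ℂ) (hc : c ∈ Ω) (φ : ℂ → ℝ) (hφ : ∀ z, 0 ≤ φ z)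
    (hbdd : ∃ U ∈ nhds c, ∃ M : ℝ, ∀ z ∈ U, φ z ≤ M)
    (Kφ K2 : ℂ → ℂ → ℂ)
    (hKφ : IsBergmanKernel Ω φ Kφ)
    (hK2 : IsBergmanKernel Ω (fun z => ‖z - c‖ ^ 2 * φ z) K2)
    (hcc : Kφ c c ≠ 0) :
    ∀ z ∈ Ω, z ≠ c → ∀ w ∈ Ω, w ≠ c →
      K2 z w = Kφ z w / ((z - c) * (conj w - conj c)) -
        Kφ z c * Kφ c w / ((z - c) * (conj w - conj c) * Kφ c c) := by
  set ψ : ℂ → ℝ := fun z => ‖z - c‖ ^ 2 * φ z with hψ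
  set H : ℂ → ℂ → ℂ := fun z w =>
    dslope (fun ζ => Kφ ζ w - Kφ ζ c * Kφ c w / Kφ c c) c z *
      ((starRingEnd ℂ) w - (starRingEnd ℂ) c)⁻¹ with hH
  have hae : ∀ᵐ ζ ∂(volume.restrict Ω), ζ ≠ c := by
    refine ae_iff.mpr ?_
    simpa [not_ne_iff] using measure_singleton (μ := volume.restrict Ω) c
  have hconj_ne : ∀ {u : ℂ}, u ≠ c → (starRingEnd ℂ) u - (starRingEnd ℂ) c ≠ 0 := by
    intro u hu h
    apply sub_ne_zero.2 hu
    apply (starRingEnd ℂ).injective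
    rw [map_sub, map_zero]; exact h
  have hds : ∀ (w : ℂ), ∀ {u : ℂ}, u ≠ c →
      dslope (fun ζ => Kφ ζ w - Kφ ζ c * Kφ c w / Kφ c c) c u
        = (Kφ u w - Kφ u c * Kφ c w / Kφ c c) / (u - c) := by
    intro w u hu
    rw [dslope_of_ne _ hu, slope_def_field]
    have h0 : Kφ c w - Kφ c c * Kφ c w / Kφ c c = 0 := by field_simp; ring
    rw [h0, sub_zero]
  -- Claim 1 : H reproduces every element of A²_ψ away from c.
  have claim1 : ∀ f, MemA2 Ω ψ f → ∀ z ∈ Ω, z ≠ c →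
      f z = ∫ w in Ω, f w * H z w * ((ψ w : ℝ) : ℂ) := by
    intro f hf z hz hzc
    have hzc' : z - c ≠ 0 := sub_ne_zero.2 hzc
    set g : ℂ → ℂ := fun w => (w - c) * f w with hgdef
    have hgmem : MemA2 Ω φ g := by
      constructor
      · exact (differentiableOn_id.sub (differentiableOn_const c)).mul hf.1
      · have he : (fun w => ‖g w‖ ^ 2 * φ w)
            = fun w => ‖f w‖ ^ 2 * ψ w := by
          funext w
          simp only [hgdef, hψ, norm_mul, mul_pow]
          ring
        rw [he]; exact hf.2
    have hgc : g c = 0 := by simp [hgdef]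
    have hA : IntegrableOn (fun w => g w * Kφ z w * ((φ w : ℝ) : ℂ)) Ω := by
      refine (aux_pair_int hΩ.measurableSet hφ hgmem (hKφ.1 z hz)).congr_fun
        (fun w hw => ?_) hΩ.measurableSet
      rw [hKφ.2.1 z hz w hw]
    have hB : IntegrableOn (fun w => g w * Kφ c w * ((φ w : ℝ) : ℂ)) Ω := by
      refine (aux_pair_int hΩ.measurableSet hφ hgmem (hKφ.1 c hc)).congr_fun
        (fun w hw => ?_) hΩ.measurableSet
      rw [hKφ.2.1 c hc w hw]
    have key : Set.EqOn (fun w => f w * H z w * ((ψ w : ℝ) : ℂ))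
        (fun w => (z - c)⁻¹ * ((g w * Kφ z w * ((φ w : ℝ) : ℂ))
          - Kφ z c / Kφ c c * (g w * Kφ c w * ((φ w : ℝ) : ℂ)))) Ω := by
      intro w hw
      by_cases hwc : w = c
      · subst hwc
        simp [hψ, hgc]
      · have hwc' : w - c ≠ 0 := sub_ne_zero.2 hwc
        have hwcc := hconj_ne hwc
        simp only [hH, hψ, hgdef]
        rw [hds w hzc]
        have hψw : ((‖w - c‖ ^ 2 * φ w : ℝ) : ℂ)
            = (w - c) * ((starRingEnd ℂ) w - (starRingEnd ℂ) c) * ((φ w : ℝ) : ℂ) := by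
          rw [Complex.ofReal_mul, Complex.sq_norm, ← Complex.mul_conj, map_sub]
        rw [hψw]
        field_simp
    rw [setIntegral_congr_fun hΩ.measurableSet key, MeasureTheory.integral_const_mul,
      integral_sub hA (hB.const_mul _), MeasureTheory.integral_const_mul,
      ← hKφ.2.2 g hgmem z hz, ← hKφ.2.2 g hgmem c hc, hgc, mul_zero, sub_zero]
    simp only [hgdef]
    rw [inv_mul_cancel_left₀ hzc']
  -- Claim 2 : columns of H at w ≠ c belong to A²_ψ.
  have claim2 : ∀ w ∈ Ω, w ≠ c → MemA2 Ω ψ (fun ζ => H ζ w) := by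
    intro w hw hwc
    have hd := hconj_ne hwc
    have hNdiff : DifferentiableOn ℂ (fun ζ => Kφ ζ w - Kφ ζ c * Kφ c w / Kφ c c) Ω :=
      (hKφ.1 w hw).1.sub (((hKφ.1 c hc).1.mul_const _).div_const _)
    constructor
    · simp only [hH]
      exact ((differentiableOn_dslope (hΩ.mem_nhds hc)).mpr hNdiff).mul_const _
    · have hcombo : IntegrableOn
          (fun ζ => ‖Kφ ζ w - (Kφ c w / Kφ c c) * Kφ ζ c‖ ^ 2 * φ ζ) Ω :=
        aux_combo_int hΩ.measurableSet hφ (hKφ.1 w hw) (hKφ.1 c hc) _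
      refine (hcombo.const_mul
        ((‖(starRingEnd ℂ) w - (starRingEnd ℂ) c‖) ^ 2)⁻¹).congr ?_
      filter_upwards [hae] with ζ hζ
      simp only [hH, hψ]
      rw [hds w hζ]
      have hz1 : ‖ζ - c‖ ≠ 0 := norm_ne_zero_iff.mpr (sub_ne_zero.2 hζ)
      have hd1 : ‖(starRingEnd ℂ) w - (starRingEnd ℂ) c‖ ≠ 0 :=
        norm_ne_zero_iff.mpr hd
      have harg : Kφ ζ w - Kφ c w / Kφ c c * Kφ ζ c = Kφ ζ w - Kφ ζ c * Kφ c w / Kφ c c := by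
        ring
      rw [harg]
      simp only [norm_mul, norm_inv, norm_div]
      have hb : ‖ζ - c‖ ^ 2 * (‖ζ - c‖)⁻¹ ^ 2 = 1 := by
        rw [← mul_pow, mul_inv_cancel₀ hz1, one_pow]
      have hcc1 : ‖Kφ c c‖ ≠ 0 := norm_ne_zero_iff.mpr hcc
      field_simp [hz1, hd1]
  intro z hz hzc w hw hwc
  have hzc' : z - c ≠ 0 := sub_ne_zero.2 hzc
  have hwcc := hconj_ne hwc
  have hHmem := claim2 w hw hwc
  have e1 : H z w = ∫ ζ in Ω, H ζ w * K2 z ζ * ((ψ ζ : ℝ) : ℂ) :=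
    hK2.2.2 (fun ζ => H ζ w) hHmem z hz
  have e2 : (∫ ζ in Ω, H ζ w * K2 z ζ * ((ψ ζ : ℝ) : ℂ))
      = ∫ ζ in Ω, conj (K2 ζ z * H w ζ * ((ψ ζ : ℝ) : ℂ)) := by
    refine integral_congr_ae ?_
    filter_upwards [hae, ae_restrict_mem hΩ.measurableSet] with ζ hζc hζΩ
    have h3 : conj (H w ζ) = H ζ w := by
      simp only [hH]
      rw [hds ζ hwc, hds w hζc]
      simp only [map_mul, map_sub, map_div₀, map_inv₀, Complex.conj_conj]
      rw [← hKφ.2.1 ζ hζΩ w hw, ← hKφ.2.1 c hc w hw, ← hKφ.2.1 ζ hζΩ c hc,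
        ← hKφ.2.1 c hc c hc]
      ring
    rw [map_mul, map_mul, h3, Complex.conj_ofReal, ← hK2.2.1 z hz ζ hζΩ]
    ring
  have e3 : (∫ ζ in Ω, conj (K2 ζ z * H w ζ * ((ψ ζ : ℝ) : ℂ))) = conj (K2 w z) := by
    rw [integral_conj]
    congr 1
    exact (claim1 (fun ζ => K2 ζ z) (hK2.1 z hz) w hw hwc).symm
  have e4 : K2 z w = H z w := by
    rw [hK2.2.1 z hz w hw, ← e3, ← e2, ← e1]
  rw [e4]
  simp only [hH]
  rw [hds w hzc]
  field_simp
end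

section
/- Let Ω ⊆ ℂ be a domain, c ∈ Ω, φ a weight bounded in a neighborhood of c, and define ψ(z) := K_φ(z,c)/(z−c) on Ω ∖ {c}. Then ψ ∈ A²_{|z−c|²φ}(Ω ∖ {c}) and ψ is orthogonal to every f ∈ A²_{|z−c|²φ}(Ω) with respect to the inner product ⟨f,g⟩ = ∫_{Ω∖{c}} f·conj(g)·|w−c|²φ(w) dV_w. -/
open MeasureTheory Complex Filter ComplexConjugate

theorem stmt_4 (Ω : Set ℂ) (hΩ : IsOpen Ω) (hconn : IsConnected Ω)
    (c : ℂ) (hc : c ∈ Ω) (φ : ℂ → ℝ) (hφ : ∀ z, 0 ≤ φ z)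
    (hbdd : ∃ U ∈ nhds c, ∃ M : ℝ, ∀ z ∈ U, φ z ≤ M)
    (Kφ : ℂ → ℂ → ℂ) (hKφ : IsBergmanKernel Ω φ Kφ)
    (ψ : ℂ → ℂ) (hψ : ∀ z, ψ z = Kφ z c / (z - c)) :
    MemA2 (Ω \ {c}) (fun z => ‖z - c‖ ^ 2 * φ z) ψ ∧
    ∀ f, MemA2 Ω (fun z => ‖z - c‖ ^ 2 * φ z) f →
      ∫ w in Ω \ {c},
        f w * conj (ψ w) * ((‖w - c‖ ^ 2 * φ w : ℝ) : ℂ) = 0 := by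
  obtain ⟨hKmem, hKsymm, hKrep⟩ := hKφ
  have hψ' : ψ = fun z => Kφ z c / (z - c) := funext hψ
  have hmeas : MeasurableSet (Ω \ {c}) := hΩ.measurableSet.diff (measurableSet_singleton c)
  have habs : ∀ z : ℂ, ((‖z - c‖ : ℝ) : ℂ) ^ 2 = (z - c) * conj (z - c) := by
    intro z
    rw [Complex.mul_conj]
    norm_cast
    exact Complex.sq_norm _
  constructor
  · constructor
    · rw [hψ']
      exact DifferentiableOn.div ((hKmem c hc).1.mono Set.diff_subset)
        (differentiableOn_id.sub (differentiableOn_const c))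
        (fun z hz => sub_ne_zero.mpr hz.2)
    · have h1 : IntegrableOn (fun z => ‖Kφ z c‖ ^ 2 * φ z) (Ω \ {c}) :=
        (hKmem c hc).2.mono_set Set.diff_subset
      refine h1.congr_fun (fun z hz => ?_) hmeas
      have hz0 : z - c ≠ 0 := sub_ne_zero.mpr hz.2
      have ha : ‖z - c‖ ≠ 0 := norm_ne_zero_iff.mpr hz0
      rw [hψ']
      simp only [norm_div, div_pow]
      field_simp
  · intro f hf
    have hg : MemA2 Ω φ (fun z => (z - c) * f z) := by
      refine ⟨(differentiableOn_id.sub (differentiableOn_const c)).mul hf.1, ?_⟩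
      refine hf.2.congr_fun (fun z _ => ?_) hΩ.measurableSet
      simp only [norm_mul]
      ring
    have hrep := hKrep _ hg c hc
    simp only [sub_self, zero_mul] at hrep
    have hcongr : ∀ w ∈ Ω \ {c},
        f w * conj (ψ w) * ((‖w - c‖ ^ 2 * φ w : ℝ) : ℂ)
          = (w - c) * f w * Kφ c w * ((φ w : ℝ) : ℂ) := by
      intro w hw
      have hw0 : w - c ≠ 0 := sub_ne_zero.mpr hw.2
      have hwc : conj (w - c) ≠ 0 := star_ne_zero.mpr hw0
      have hwc' : conj w - conj c ≠ 0 := by rwa [map_sub] at hwc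
      rw [hψ w, hKsymm c hc w hw.1]
      push_cast
      rw [habs w, map_div₀, map_sub]
      field_simp
    calc ∫ w in Ω \ {c}, f w * conj (ψ w) * ((‖w - c‖ ^ 2 * φ w : ℝ) : ℂ)
        = ∫ w in Ω \ {c}, (w - c) * f w * Kφ c w * ((φ w : ℝ) : ℂ) :=
          setIntegral_congr_fun hmeas hcongr
      _ = ∫ w in Ω, (w - c) * f w * Kφ c w * ((φ w : ℝ) : ℂ) := by
          apply setIntegral_congr_set
          exact MeasureTheory.diff_ae_eq_self.mpr
            (measure_mono_null Set.inter_subset_right (measure_singleton c))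
      _ = 0 := hrep.symm
end

section
/- Let Ω ⊆ ℂ be a domain, c ∈ Ω, and φ a weight bounded in a neighborhood of c. Then for every f ∈ A²_{|z−c|²φ}(Ω) and every z ∈ Ω ∖ {c}, ∫_{Ω∖{c}} f(w) · [K_φ(z,w)/((z−c)(conj(w)−conj(c)))] · |w−c|²φ(w) dV_w = f(z). That is, K_φ(z,w)/((z−c)(conj(w)−conj(c))) reproduces elements of A²_{|z−c|²φ}(Ω) inside A²_{|z−c|²φ}(Ω ∖ {c}). -/
open MeasureTheory Complex Filter ComplexConjugate

theorem stmt_5 (Ω : Set ℂ) (hΩ : IsOpen Ω) (hconn : IsConnected Ω)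
    (c : ℂ) (hc : c ∈ Ω) (φ : ℂ → ℝ) (hφ : ∀ z, 0 ≤ φ z)
    (hbdd : ∃ U ∈ nhds c, ∃ M : ℝ, ∀ z ∈ U, φ z ≤ M)
    (Kφ : ℂ → ℂ → ℂ) (hKφ : IsBergmanKernel Ω φ Kφ) :
    ∀ f, MemA2 Ω (fun z => ‖z - c‖ ^ 2 * φ z) f →
      ∀ z ∈ Ω \ {c},
        ∫ w in Ω \ {c},
          f w * (Kφ z w / ((z - c) * (conj w - conj c))) *
            ((‖w - c‖ ^ 2 * φ w : ℝ) : ℂ) = f z := by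

  intro f hf z hz
  obtain ⟨hfd, hfi⟩ := hf
  obtain ⟨hzΩ, hzc⟩ := hz
  have hzc' : z - c ≠ 0 := sub_ne_zero.mpr hzc
  set g : ℂ → ℂ := fun w => (w - c) * f w with hg
  have hgA2 : MemA2 Ω φ g := by
    constructor
    · exact (differentiableOn_id.sub (differentiableOn_const c)).mul hfd
    · have : (fun w => ‖g w‖ ^ 2 * φ w)
          = fun w => ‖f w‖ ^ 2 * (‖w - c‖ ^ 2 * φ w) := by
        funext w
        simp only [hg, norm_mul, mul_pow]
        ring
      rw [this] at *
      exact hfi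
  have hrep := hKφ.2.2 g hgA2 z hzΩ
  have hmeas : MeasurableSet (Ω \ {c}) :=
    hΩ.measurableSet.diff (measurableSet_singleton c)
  have hstep1 : ∫ w in Ω \ {c},
        f w * (Kφ z w / ((z - c) * (conj w - conj c))) *
          ((‖w - c‖ ^ 2 * φ w : ℝ) : ℂ)
      = ∫ w in Ω \ {c}, (g w * Kφ z w * ((φ w : ℝ) : ℂ)) / (z - c) := by
    apply MeasureTheory.setIntegral_congr_fun hmeas
    intro w hw
    have hwc : w - c ≠ 0 := sub_ne_zero.mpr hw.2
    have hwc' : conj w - conj c ≠ 0 := sub_ne_zero.mpr fun h =>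
      hwc (sub_eq_zero.mpr ((starRingEnd ℂ).injective h))
    have habs : ((‖w - c‖ : ℝ) : ℂ) ^ 2 = (w - c) * conj (w - c) := by
      rw [← Complex.ofReal_pow, Complex.mul_conj, Complex.sq_norm]
    push_cast
    rw [habs, map_sub]
    field_simp [hg]
    ring
  have hnull : (Ω \ {c} : Set ℂ) =ᵐ[volume] (Ω : Set ℂ) := by
    rw [MeasureTheory.diff_ae_eq_self]
    exact measure_mono_null Set.inter_subset_right (measure_singleton c)
  have hstep2 : ∫ w in Ω \ {c}, (g w * Kφ z w * ((φ w : ℝ) : ℂ)) / (z - c)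
      = ∫ w in Ω, (g w * Kφ z w * ((φ w : ℝ) : ℂ)) / (z - c) :=
    MeasureTheory.setIntegral_congr_set hnull
  rw [hstep1, hstep2, MeasureTheory.integral_div, ← hrep, hg]
  field_simp
end

section
/- Let Ω ⊆ ℂ be a domain, {c_j}_{j=1}^m distinct points of Ω, {α_j} positive integers, and φ a weight bounded and bounded away from zero near each c_j. With p(z) = ∏_j (z−c_j)^{α_j}, p_{j,k}(z) = (z−c_1)^{α_1}⋯(z−c_{j−1})^{α_{j−1}}(z−c_j)^k for 1 ≤ k ≤ α_j, and q_{j,k} = p/p_{j,k}, the functions ψ_{j,k}(z) := K_{|q_{j,k}|²φ}(z, c_j)/p_{j,k}(z) are pairwise orthogonal in A²_{|p|²φ}(Ω ∖ {c_1,…,c_m}). -/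
open MeasureTheory Complex Filter ComplexConjugate

private lemma habs_cast (w : ℂ) : ((‖w‖ ^ 2 : ℝ) : ℂ) = w * conj w := by
  rw [Complex.sq_norm]
  exact (Complex.mul_conj w).symm

/-- The core orthogonality computation, given a "transition polynomial" `r` with
`r * p_{j₀,k₀} = p_{j₁,k₁}` and `r (c j₁) = 0`. -/
private lemma core (Ω : Set ℂ) (hΩ : IsOpen Ω)
    (m : ℕ) (c : Fin m → ℂ) (hcΩ : ∀ j, c j ∈ Ω)
    (α : Fin m → ℕ) (φ : ℂ → ℝ)
    (p : ℂ → ℂ) (hp : ∀ z, p z = ∏ j, (z - c j) ^ α j)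
    (pjk : Fin m → ℕ → ℂ → ℂ)
    (hpjk : ∀ j k z, pjk j k z = (∏ i ∈ Finset.Iio j, (z - c i) ^ α i) * (z - c j) ^ k)
    (q : Fin m → ℕ → ℂ → ℂ) (hq : ∀ j k z, q j k z = p z / pjk j k z)
    (K : Fin m → ℕ → ℂ → ℂ → ℂ)
    (hK : ∀ j k, 1 ≤ k → k ≤ α j →
      IsBergmanKernel Ω (fun z => ‖q j k z‖ ^ 2 * φ z) (K j k))
    (ψ : Fin m → ℕ → ℂ → ℂ) (hψ : ∀ j k z, ψ j k z = K j k z (c j) / pjk j k z)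
    (j₀ : Fin m) (k₀ : ℕ) (j₁ : Fin m) (k₁ : ℕ)
    (hk₀ : 1 ≤ k₀) (hk₀' : k₀ ≤ α j₀) (hk₁ : 1 ≤ k₁) (hk₁' : k₁ ≤ α j₁)
    (r : ℂ → ℂ) (hr : Differentiable ℂ r) (hr0 : r (c j₁) = 0)
    (hrp : ∀ z, r z * pjk j₀ k₀ z = pjk j₁ k₁ z) :
    ∫ z in Ω \ Set.range c,
      ψ j₀ k₀ z * conj (ψ j₁ k₁ z) * ((‖p z‖ ^ 2 * φ z : ℝ) : ℂ) = 0 := by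
  obtain ⟨hK0mem, -, -⟩ := hK j₀ k₀ hk₀ hk₀'
  obtain ⟨-, hK1sym, hK1rep⟩ := hK j₁ k₁ hk₁ hk₁'
  have hnull : volume (Set.range c) = 0 := (Set.finite_range c).measure_zero _
  have hae : ∀ᵐ z : ℂ, z ∉ Set.range c := measure_eq_zero_iff_ae_notMem.mp hnull
  have hpjkne : ∀ (j : Fin m) (k : ℕ) (z : ℂ), z ∉ Set.range c → pjk j k z ≠ 0 := by
    intro j k z hz
    rw [hpjk]
    refine mul_ne_zero (Finset.prod_ne_zero_iff.mpr fun i _ => ?_) ?_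
    · exact pow_ne_zero _ (sub_ne_zero.mpr fun h => hz ⟨i, h.symm⟩)
    · exact pow_ne_zero _ (sub_ne_zero.mpr fun h => hz ⟨j, h.symm⟩)
  set g : ℂ → ℂ := fun z => r z * K j₀ k₀ z (c j₀) with hg
  have hkey : ∀ z ∉ Set.range c, r z * q j₁ k₁ z = q j₀ k₀ z := by
    intro z hz
    have h0 := hpjkne j₀ k₀ z hz
    have h1 := hpjkne j₁ k₁ z hz
    rw [hq, hq]
    field_simp
    linear_combination p z * hrp z
  have hgmem : MemA2 Ω (fun z => ‖q j₁ k₁ z‖ ^ 2 * φ z) g := by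
    constructor
    · exact hr.differentiableOn.mul (hK0mem (c j₀) (hcΩ j₀)).1
    · have h0 := (hK0mem (c j₀) (hcΩ j₀)).2
      refine h0.congr (ae_restrict_of_ae ?_)
      filter_upwards [hae] with z hz
      have hq0 : ‖q j₀ k₀ z‖ = ‖r z‖ * ‖q j₁ k₁ z‖ := by
        rw [← norm_mul, hkey z hz]
      simp only [hg, norm_mul, hq0]
      ring
  have hrep := hK1rep g hgmem (c j₁) (hcΩ j₁)
  have hg0 : g (c j₁) = 0 := by simp [hg, hr0]
  have hset : (Ω \ Set.range c : Set ℂ) =ᵐ[volume] Ω := by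
    rw [MeasureTheory.diff_ae_eq_self]
    exact measure_mono_null Set.inter_subset_right hnull
  have hpt : ∀ᵐ z : ℂ, z ∈ Ω →
      ψ j₀ k₀ z * conj (ψ j₁ k₁ z) * ((‖p z‖ ^ 2 * φ z : ℝ) : ℂ)
        = g z * K j₁ k₁ (c j₁) z * ((‖q j₁ k₁ z‖ ^ 2 * φ z : ℝ) : ℂ) := by
    filter_upwards [hae] with z hz hzΩ
    have h0 := hpjkne j₀ k₀ z hz
    have h1 := hpjkne j₁ k₁ z hz
    have hc1 : conj (pjk j₁ k₁ z) ≠ 0 := by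
      simpa using h1
    rw [hψ, hψ, hq, hK1sym (c j₁) (hcΩ j₁) z hzΩ, Complex.ofReal_mul, Complex.ofReal_mul,
      habs_cast, habs_cast, hg]
    simp only [map_div₀]
    field_simp
    linear_combination (-(K j₀ k₀ z (c j₀) * conj (K j₁ k₁ z (c j₁)) * p z * conj (p z) * (φ z : ℂ))) * hrp z
  calc ∫ z in Ω \ Set.range c,
        ψ j₀ k₀ z * conj (ψ j₁ k₁ z) * ((‖p z‖ ^ 2 * φ z : ℝ) : ℂ)
      = ∫ z in Ω,
        ψ j₀ k₀ z * conj (ψ j₁ k₁ z) * ((‖p z‖ ^ 2 * φ z : ℝ) : ℂ) :=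
        setIntegral_congr_set hset
    _ = ∫ z in Ω, g z * K j₁ k₁ (c j₁) z * ((‖q j₁ k₁ z‖ ^ 2 * φ z : ℝ) : ℂ) :=
        setIntegral_congr_ae hΩ.measurableSet hpt
    _ = g (c j₁) := hrep.symm
    _ = 0 := hg0

private lemma prod_Iio_split (m : ℕ) (j₀ j₁ : Fin m) (h : j₀ < j₁) (f : Fin m → ℂ) :
    ∏ i ∈ Finset.Iio j₁, f i = (∏ i ∈ Finset.Iio j₀, f i) * f j₀ * ∏ i ∈ Finset.Ioo j₀ j₁, f i := by
  have h1 : Finset.Iio j₁ = Finset.Iio j₀ ∪ Finset.Ico j₀ j₁ := by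
    ext i
    simp only [Finset.mem_Iio, Finset.mem_union, Finset.mem_Ico]
    constructor
    · intro hi; rcases lt_or_ge i j₀ with h' | h'
      · exact Or.inl h'
      · exact Or.inr ⟨h', hi⟩
    · rintro (h' | ⟨-, h'⟩); exacts [h'.trans h, h']
  have hd : Disjoint (Finset.Iio j₀) (Finset.Ico j₀ j₁) := by
    rw [Finset.disjoint_left]; intro i hi hi'
    simp only [Finset.mem_Iio] at hi
    simp only [Finset.mem_Ico] at hi'
    exact absurd hi'.1 (not_le.mpr hi)
  rw [h1, Finset.prod_union hd, ← Finset.Ioo_insert_left h, Finset.prod_insert (by simp),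
    mul_assoc]

theorem stmt_6 (Ω : Set ℂ) (hΩ : IsOpen Ω) (hconn : IsConnected Ω)
    (m : ℕ) (c : Fin m → ℂ) (hcΩ : ∀ j, c j ∈ Ω) (hinj : Function.Injective c)
    (α : Fin m → ℕ) (hα : ∀ j, 0 < α j)
    (φ : ℂ → ℝ) (hφ : ∀ z, 0 ≤ φ z)
    (hbdd : ∀ j, ∃ U ∈ nhds (c j), ∃ ε M : ℝ, 0 < ε ∧ ∀ z ∈ U, ε ≤ φ z ∧ φ z ≤ M)
    (p : ℂ → ℂ) (hp : ∀ z, p z = ∏ j, (z - c j) ^ α j)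
    (pjk : Fin m → ℕ → ℂ → ℂ)
    (hpjk : ∀ j k z, pjk j k z = (∏ i ∈ Finset.Iio j, (z - c i) ^ α i) * (z - c j) ^ k)
    (q : Fin m → ℕ → ℂ → ℂ) (hq : ∀ j k z, q j k z = p z / pjk j k z)
    (K : Fin m → ℕ → ℂ → ℂ → ℂ)
    (hK : ∀ j k, 1 ≤ k → k ≤ α j →
      IsBergmanKernel Ω (fun z => ‖q j k z‖ ^ 2 * φ z) (K j k))
    (ψ : Fin m → ℕ → ℂ → ℂ)
    (hψ : ∀ j k z, ψ j k z = K j k z (c j) / pjk j k z) :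
    ∀ j₀ k₀ j₁ k₁, 1 ≤ k₀ → k₀ ≤ α j₀ → 1 ≤ k₁ → k₁ ≤ α j₁ →
      (j₀, k₀) ≠ (j₁, k₁) →
      ∫ z in Ω \ Set.range c,
        ψ j₀ k₀ z * conj (ψ j₁ k₁ z) *
          ((‖p z‖ ^ 2 * φ z : ℝ) : ℂ) = 0 := by
  -- first, the lexicographically ordered case
  have main : ∀ j₀ k₀ j₁ k₁, 1 ≤ k₀ → k₀ ≤ α j₀ → 1 ≤ k₁ → k₁ ≤ α j₁ →
      (j₀ < j₁ ∨ (j₀ = j₁ ∧ k₀ < k₁)) →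
      ∫ z in Ω \ Set.range c,
        ψ j₀ k₀ z * conj (ψ j₁ k₁ z) * ((‖p z‖ ^ 2 * φ z : ℝ) : ℂ) = 0 := by
    intro j₀ k₀ j₁ k₁ hk₀ hk₀' hk₁ hk₁' hlex
    rcases hlex with hj | ⟨rfl, hk⟩
    · refine core Ω hΩ m c hcΩ α φ p hp pjk hpjk q hq K hK ψ hψ j₀ k₀ j₁ k₁ hk₀ hk₀' hk₁ hk₁'
        (fun z => (z - c j₀) ^ (α j₀ - k₀) * (∏ i ∈ Finset.Ioo j₀ j₁, (z - c i) ^ α i)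
          * (z - c j₁) ^ k₁) ?_ ?_ ?_
      · refine (((differentiable_id.sub_const _).pow _).mul ?_).mul
          ((differentiable_id.sub_const _).pow _)
        exact Differentiable.fun_finsetProd fun i _ => (differentiable_id.sub_const _).pow _
      · simp [zero_pow (by omega : k₁ ≠ 0)]
      · intro z
        have hsplit : (z - c j₀) ^ α j₀ = (z - c j₀) ^ k₀ * (z - c j₀) ^ (α j₀ - k₀) := by
          rw [← pow_add, Nat.add_sub_cancel' hk₀']
        rw [hpjk, hpjk, prod_Iio_split m j₀ j₁ hj, hsplit]
        ring
    · refine core Ω hΩ m c hcΩ α φ p hp pjk hpjk q hq K hK ψ hψ j₀ k₀ j₀ k₁ hk₀ hk₀' hk₁ hk₁'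
        (fun z => (z - c j₀) ^ (k₁ - k₀)) ((differentiable_id.sub_const _).pow _)
        (by simp [zero_pow (by omega : k₁ - k₀ ≠ 0)]) ?_
      intro z
      have hsplit : (z - c j₀) ^ k₁ = (z - c j₀) ^ k₀ * (z - c j₀) ^ (k₁ - k₀) := by
        rw [← pow_add, Nat.add_sub_cancel' hk.le]
      rw [hpjk, hpjk, hsplit]
      ring
  intro j₀ k₀ j₁ k₁ hk₀ hk₀' hk₁ hk₁' hne
  have flip : ∀ j₀ k₀ j₁ k₁, (∫ z in Ω \ Set.range c,
        ψ j₁ k₁ z * conj (ψ j₀ k₀ z) * ((‖p z‖ ^ 2 * φ z : ℝ) : ℂ)) = 0 →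
      ∫ z in Ω \ Set.range c,
        ψ j₀ k₀ z * conj (ψ j₁ k₁ z) * ((‖p z‖ ^ 2 * φ z : ℝ) : ℂ) = 0 := by
    intro a b a' b' h
    calc ∫ z in Ω \ Set.range c,
          ψ a b z * conj (ψ a' b' z) * ((‖p z‖ ^ 2 * φ z : ℝ) : ℂ)
        = ∫ z in Ω \ Set.range c,
          conj (ψ a' b' z * conj (ψ a b z) * ((‖p z‖ ^ 2 * φ z : ℝ) : ℂ)) := by
          refine integral_congr_ae (Filter.Eventually.of_forall fun z => ?_)
          simp only [map_mul, Complex.conj_conj, Complex.conj_ofReal]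
          ring
      _ = conj (∫ z in Ω \ Set.range c,
          ψ a' b' z * conj (ψ a b z) * ((‖p z‖ ^ 2 * φ z : ℝ) : ℂ)) := integral_conj
      _ = 0 := by rw [h, map_zero]
  rcases lt_trichotomy j₀ j₁ with hj | hj | hj
  · exact main j₀ k₀ j₁ k₁ hk₀ hk₀' hk₁ hk₁' (Or.inl hj)
  · subst hj
    rcases lt_trichotomy k₀ k₁ with hk | hk | hk
    · exact main j₀ k₀ j₀ k₁ hk₀ hk₀' hk₁ hk₁' (Or.inr ⟨rfl, hk⟩)
    · exact absurd (by rw [hk]) hne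
    · exact flip j₀ k₀ j₀ k₁ (main j₀ k₁ j₀ k₀ hk₁ hk₁' hk₀ hk₀' (Or.inr ⟨rfl, hk⟩))
  · exact flip j₀ k₀ j₁ k₁ (main j₁ k₁ j₀ k₀ hk₁ hk₁' hk₀ hk₀' (Or.inl hj))
end

section
/- Let Ω ⊆ ℂ be a domain, z₀, c ∈ Ω with z₀ ≠ c, and φ a weight bounded and bounded away from zero near c, with K_φ(c,c) ≠ 0. Suppose K_φ(z₀,c) = 0. Then the conjugate-holomorphic function w ↦ K_{|z−c|²φ}(z₀,w) has a zero of order m−1 at w = c if and only if w ↦ K_φ(z₀,w) has a zero of order m ≥ 1 at w = c. Indeed, K_{|z−c|²φ}(z₀,w) = K_φ(z₀,w)/((z₀−c)(conj(w)−conj(c))). -/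
open MeasureTheory Complex Filter ComplexConjugate

/-- `f` has a zero of order `m` at `c`. -/
def HasZeroOfOrder (f : ℂ → ℂ) (c : ℂ) (m : ℕ) : Prop :=
  ∃ g : ℂ → ℂ, AnalyticAt ℂ g c ∧ g c ≠ 0 ∧ ∀ᶠ w in nhds c, f w = (w - c) ^ m * g w

theorem stmt_8 (Ω : Set ℂ) (hΩ : IsOpen Ω) (hconn : IsConnected Ω)
    (c z₀ : ℂ) (hc : c ∈ Ω) (hz₀ : z₀ ∈ Ω) (hz₀c : z₀ ≠ c)
    (φ : ℂ → ℝ) (hφ : ∀ z, 0 ≤ φ z)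
    (hbdd : ∃ U ∈ nhds c, ∃ ε M : ℝ, 0 < ε ∧ ∀ z ∈ U, ε ≤ φ z ∧ φ z ≤ M)
    (Kφ K2 : ℂ → ℂ → ℂ)
    (hKφ : IsBergmanKernel Ω φ Kφ)
    (hK2 : IsBergmanKernel Ω (fun z => ‖z - c‖ ^ 2 * φ z) K2)
    (hcc : Kφ c c ≠ 0)
    (hdec : ∀ z ∈ Ω, z ≠ c → ∀ w ∈ Ω, w ≠ c →
      K2 z w = (Kφ z w - Kφ z c * Kφ c w / Kφ c c) / ((z - c) * (conj w - conj c)))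
    (hzero : Kφ z₀ c = 0) (m : ℕ) (hm : 1 ≤ m) :
    (HasZeroOfOrder (fun w => conj (K2 z₀ w)) c (m - 1) ↔
      HasZeroOfOrder (fun w => conj (Kφ z₀ w)) c m) ∧
    ∀ w ∈ Ω, w ≠ c → K2 z₀ w = Kφ z₀ w / ((z₀ - c) * (conj w - conj c)) := by
  obtain ⟨hA2, hsym2, _⟩ := hK2
  have hz₀c' : z₀ - c ≠ 0 := sub_ne_zero.mpr hz₀c
  have hconjne : ∀ a b : ℂ, a ≠ b → conj a - conj b ≠ 0 := fun a b hab =>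
    sub_ne_zero.mpr fun h => hab ((starRingEnd ℂ).injective h)
  have hcz₀' : conj (z₀ - c) ≠ 0 := by
    rw [map_sub]; exact hconjne _ _ hz₀c
  have hcz₀'' : conj z₀ - conj c ≠ 0 := hconjne _ _ hz₀c
  have key : ∀ w ∈ Ω, w ≠ c → K2 z₀ w = Kφ z₀ w / ((z₀ - c) * (conj w - conj c)) := by
    intro w hw hwc
    rw [hdec z₀ hz₀ hz₀c w hw hwc, hzero]
    ring_nf
  obtain ⟨k, rfl⟩ : ∃ k, m = k + 1 := ⟨m - 1, (Nat.succ_pred_eq_of_pos hm).symm⟩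
  simp only [Nat.add_sub_cancel]
  refine ⟨?_, key⟩
  have hΩnb : Ω ∈ nhds c := hΩ.mem_nhds hc
  constructor
  · rintro ⟨g, hg, hgc, hev⟩
    refine ⟨fun w => conj (z₀ - c) * g w, analyticAt_const.mul hg,
      mul_ne_zero hcz₀' hgc, ?_⟩
    filter_upwards [hev, hΩnb] with w hw hwΩ
    by_cases hwc : w = c
    · subst hwc
      simp [hzero, pow_succ]
    · have hwc' : w - c ≠ 0 := sub_ne_zero.mpr hwc
      have hwcc : conj w - conj c ≠ 0 := hconjne _ _ hwc
      have hK : Kφ z₀ w = K2 z₀ w * ((z₀ - c) * (conj w - conj c)) := by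
        rw [key w hwΩ hwc]
        field_simp
      calc conj (Kφ z₀ w) = conj (K2 z₀ w) * (conj (z₀ - c) * (w - c)) := by
            rw [hK]; simp [map_mul, map_sub]
        _ = (w - c) ^ k * g w * (conj (z₀ - c) * (w - c)) := by rw [hw]
        _ = (w - c) ^ (k + 1) * (conj (z₀ - c) * g w) := by ring
  · rintro ⟨g, hg, hgc, hev⟩
    set h : ℂ → ℂ := fun w => (w - c) ^ k * (g w / conj (z₀ - c)) with hh
    have hpunct : ∀ᶠ w in nhdsWithin c {c}ᶜ, K2 w z₀ = h w := by
      filter_upwards [eventually_nhdsWithin_of_eventually_nhds (hev.and hΩnb),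
        self_mem_nhdsWithin] with w hw hwc
      obtain ⟨hw1, hwΩ⟩ := hw
      have hwc' : w - c ≠ 0 := sub_ne_zero.mpr hwc
      have hwcc : conj w - conj c ≠ 0 := hconjne _ _ hwc
      have h1 : K2 w z₀ = conj (K2 z₀ w) := by
        rw [hsym2 z₀ hz₀ w hwΩ]; simp
      rw [h1, key w hwΩ hwc, map_div₀, hw1, map_mul, map_sub, map_sub]
      simp only [Complex.conj_conj, hh, map_sub]
      rw [pow_succ]
      field_simp
    have hFcont : ContinuousAt (fun w => K2 w z₀) c :=
      ((hA2 z₀ hz₀).1.differentiableAt hΩnb).continuousAt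
    have hhcont : ContinuousAt h c := by
      apply ContinuousAt.mul
      · exact (continuousAt_id.sub continuousAt_const).pow k
      · exact hg.continuousAt.div continuousAt_const hcz₀'
    have hFc : K2 c z₀ = h c :=
      tendsto_nhds_unique (hFcont.tendsto.mono_left nhdsWithin_le_nhds)
        ((hhcont.tendsto.mono_left nhdsWithin_le_nhds).congr'
          (hpunct.mono fun w hw => hw.symm))
    refine ⟨fun w => g w / conj (z₀ - c), hg.div analyticAt_const hcz₀',
      div_ne_zero hgc hcz₀', ?_⟩
    filter_upwards [hev, hΩnb] with w hw hwΩ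
    by_cases hwc : w = c
    · have h1 : conj (K2 z₀ w) = K2 w z₀ := by
        rw [hsym2 z₀ hz₀ w hwΩ]; simp
      simp only [hwc] at h1 ⊢
      rw [h1, hFc]
    · have hwc' : w - c ≠ 0 := sub_ne_zero.mpr hwc
      have hwcc : conj w - conj c ≠ 0 := hconjne _ _ hwc
      rw [key w hwΩ hwc, map_div₀, hw, map_mul, map_sub, map_sub]
      simp only [Complex.conj_conj]
      rw [pow_succ]
      field_simp
end

section
/- Let Ω ⊆ ℂ be a domain and φ a weight. Suppose c, w₀ ∈ Ω are such that the holomorphic function z ↦ K_φ(z,w₀) has a zero of order m > 1 at z = c, and K_φ(c,c) ≠ 0 with φ bounded and bounded away from zero near c. Then z ↦ K_{|z−c|²φ}(z,w₀) equals K_φ(z,w₀)/((z−c)(conj(w₀)−conj(c))) and has a zero of order m−1 at z = c; in particular K_{|z−c|²φ}(·,w₀) vanishes somewhere on Ω (at z = c, with multiplicity m−1 ≥ 1). -/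
open MeasureTheory Complex Filter ComplexConjugate

theorem stmt_11 (Ω : Set ℂ) (hΩ : IsOpen Ω) (hconn : IsConnected Ω)
    (c w₀ : ℂ) (hc : c ∈ Ω) (hw₀ : w₀ ∈ Ω)
    (φ : ℂ → ℝ) (hφ : ∀ z, 0 ≤ φ z)
    (hbdd : ∃ U ∈ nhds c, ∃ ε M : ℝ, 0 < ε ∧ ∀ z ∈ U, ε ≤ φ z ∧ φ z ≤ M)
    (Kφ K2 : ℂ → ℂ → ℂ)
    (hKφ : IsBergmanKernel Ω φ Kφ)
    (hK2 : IsBergmanKernel Ω (fun z => ‖z - c‖ ^ 2 * φ z) K2)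
    (hcc : Kφ c c ≠ 0)
    (hdec : ∀ z ∈ Ω, z ≠ c → ∀ w ∈ Ω, w ≠ c →
      K2 z w = (Kφ z w - Kφ z c * Kφ c w / Kφ c c) / ((z - c) * (conj w - conj c)))
    (m : ℕ) (hm : 1 < m)
    (horder : HasZeroOfOrder (fun z => Kφ z w₀) c m) :
    (∀ z ∈ Ω, z ≠ c → K2 z w₀ = Kφ z w₀ / ((z - c) * (conj w₀ - conj c))) ∧
    HasZeroOfOrder (fun z => K2 z w₀) c (m - 1) ∧
    K2 c w₀ = 0 := by
  obtain ⟨g, hg, hgc, hfe⟩ := horder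
  have hm0 : m ≠ 0 := by omega
  have hKcw0 : Kφ c w₀ = 0 := by
    have := hfe.self_of_nhds
    simpa [sub_self, zero_pow hm0] using this
  have hw0c : w₀ ≠ c := by
    rintro rfl; exact hcc hKcw0
  have hd : conj w₀ - conj c ≠ 0 := by
    rw [← map_sub, map_ne_zero]
    exact sub_ne_zero.2 hw0c
  have part1 : ∀ z ∈ Ω, z ≠ c → K2 z w₀ = Kφ z w₀ / ((z - c) * (conj w₀ - conj c)) := by
    intro z hz hzc
    rw [hdec z hz hzc w₀ hw₀ hw0c, hKcw0]
    simp
  -- eventual formula on punctured neighborhood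
  have hev : ∀ᶠ z in nhdsWithin c {c}ᶜ,
      K2 z w₀ = (z - c) ^ (m - 1) * (g z / (conj w₀ - conj c)) := by
    have h1 : ∀ᶠ z in nhdsWithin c {c}ᶜ, z ∈ Ω :=
      eventually_nhdsWithin_of_eventually_nhds (hΩ.mem_nhds hc)
    have h2 : ∀ᶠ z in nhdsWithin c {c}ᶜ, Kφ z w₀ = (z - c) ^ m * g z :=
      eventually_nhdsWithin_of_eventually_nhds hfe
    filter_upwards [h1, h2, self_mem_nhdsWithin] with z hz hK hzc
    have hzc' : z ≠ c := hzc
    have hzc0 : z - c ≠ 0 := sub_ne_zero.2 hzc'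
    rw [part1 z hz hzc', hK]
    rw [show m = (m - 1) + 1 by omega, pow_succ]
    field_simp
    ring_nf
    rw [Nat.add_sub_cancel_left]
  have hcont : ContinuousAt (fun z => K2 z w₀) c :=
    ((hK2.1 w₀ hw₀).1.differentiableAt (hΩ.mem_nhds hc)).continuousAt
  have htend : Tendsto (fun z => (z - c) ^ (m - 1) * (g z / (conj w₀ - conj c)))
      (nhds c) (nhds 0) := by
    have : ContinuousAt (fun z => (z - c) ^ (m - 1) * (g z / (conj w₀ - conj c))) c := by
      exact ((continuousAt_id.sub continuousAt_const).pow _).mul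
        (hg.continuousAt.div continuousAt_const hd)
    simpa [zero_pow (show m - 1 ≠ 0 by omega)] using this.tendsto
  have hK2c : K2 c w₀ = 0 := by
    have t1 : Tendsto (fun z => K2 z w₀) (nhdsWithin c {c}ᶜ) (nhds (K2 c w₀)) :=
      hcont.continuousWithinAt.tendsto
    have t2 : Tendsto (fun z => K2 z w₀) (nhdsWithin c {c}ᶜ) (nhds 0) :=
      Tendsto.congr' (by filter_upwards [hev] with z h using h.symm)
        (htend.mono_left nhdsWithin_le_nhds)
    exact tendsto_nhds_unique t1 t2
  refine ⟨part1, ⟨fun z => g z / (conj w₀ - conj c),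
    hg.div analyticAt_const hd, div_ne_zero hgc hd, ?_⟩, hK2c⟩
  have h1 : ∀ᶠ z in nhds c, z ∈ Ω := hΩ.mem_nhds hc
  filter_upwards [h1, hfe] with z hz hK
  rcases eq_or_ne z c with rfl | hzc
  · simp [hK2c, sub_self, zero_pow (show m - 1 ≠ 0 by omega)]
  · have hzc0 : z - c ≠ 0 := sub_ne_zero.2 hzc
    rw [part1 z hz hzc, hK, show m = (m - 1) + 1 by omega, pow_succ]
    field_simp
    ring_nf
    rw [Nat.add_sub_cancel_left]
end

section
/- Let Ω ⊆ ℂ be a domain, p₀ ∈ ∂Ω, {p_j} ⊆ Ω a sequence with p_j → p₀ such that K_φ(z,p_j)/√(K_φ(p_j,p_j)) → 0 locally uniformly in z. Then for any c ∈ Ω with K_φ(c,c) ≠ 0, K_{|z−c|²φ}(z,p_j)/√(K_{|z−c|²φ}(p_j,p_j)) → 0 locally uniformly in z on Ω ∖ {c} as j → ∞. -/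
open MeasureTheory Complex Filter ComplexConjugate
open Set Topology

lemma countable_zeroset {Ω : Set ℂ} (hΩ : IsOpen Ω) (hconn : IsConnected Ω)
    {g : ℂ → ℂ} (hg : DifferentiableOn ℂ g Ω) {c : ℂ} (hc : c ∈ Ω) (hgc : g c ≠ 0) :
    ({z ∈ Ω | g z = 0} : Set ℂ).Countable := by
  set Z := {z ∈ Ω | g z = 0} with hZ
  have han : AnalyticOnNhd ℂ g Ω := hg.analyticOnNhd hΩ
  have hdisc : DiscreteTopology Z := by
    rw [discreteTopology_subtype_iff]
    intro x hx
    rcases (han x hx.1).eventually_eq_zero_or_eventually_ne_zero with h | h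
    · exact absurd (han.eqOn_zero_of_preconnected_of_frequently_eq_zero hconn.isPreconnected hx.1
        ((h.filter_mono nhdsWithin_le_nhds).frequently) hc) hgc
    · rw [inf_principal_eq_bot]
      exact h.mono fun z hz hzZ => hz hzZ.2
  exact (HereditarilyLindelof_LindelofSets Z).countable hdisc

lemma phi_aemeasurable {Ω : Set ℂ} (hΩ : IsOpen Ω) (hconn : IsConnected Ω)
    {φ : ℂ → ℝ} {g : ℂ → ℂ} (hg : DifferentiableOn ℂ g Ω) {c : ℂ} (hc : c ∈ Ω) (hgc : g c ≠ 0)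
    (hint : IntegrableOn (fun z => ‖g z‖ ^ 2 * φ z) Ω) :
    AEMeasurable φ (volume.restrict Ω) := by
  have hZ : (volume.restrict Ω) {z ∈ Ω | g z = 0} = 0 := by
    refine le_antisymm (le_trans (Measure.restrict_le_self _) ?_) (zero_le)
    rw [(countable_zeroset hΩ hconn hg hc hgc).measure_zero]
  have h1 : AEMeasurable (fun z => ‖g z‖ ^ 2 * φ z) (volume.restrict Ω) :=
    hint.aemeasurable
  have h2 : AEMeasurable (fun z => ‖g z‖ ^ 2) (volume.restrict Ω) :=
    ((continuous_norm.comp_continuousOn hg.continuousOn).pow 2).aemeasurable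
      hΩ.measurableSet
  refine (h1.div h2).congr ?_
  have hmem := ae_restrict_mem (μ := volume) hΩ.measurableSet
  have hne : ∀ᵐ z ∂(volume.restrict Ω), z ∉ {z ∈ Ω | g z = 0} := by
    rw [ae_iff]; simpa using hZ
  filter_upwards [hmem, hne] with z hzΩ hzZ
  have : g z ≠ 0 := fun h0 => hzZ ⟨hzΩ, h0⟩
  have habs : ‖g z‖ ^ 2 ≠ 0 := pow_ne_zero _ (norm_ne_zero_iff.mpr this)
  simp only [Pi.div_apply]
  field_simp

lemma integrable_pair {Ω : Set ℂ} (hΩ : IsOpen Ω) {φ : ℂ → ℝ} (hφ : ∀ z, 0 ≤ φ z)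
    (hφm : AEMeasurable φ (volume.restrict Ω))
    {f g : ℂ → ℂ} (hf : ContinuousOn f Ω) (hg : ContinuousOn g Ω)
    (hfi : IntegrableOn (fun u => ‖f u‖ ^ 2 * φ u) Ω)
    (hgi : IntegrableOn (fun u => ‖g u‖ ^ 2 * φ u) Ω) :
    IntegrableOn (fun u => f u * g u * ((φ u : ℝ) : ℂ)) Ω := by
  have hb : Integrable (fun u => (1/2 : ℝ) * ((‖f u‖ ^ 2 * φ u)
      + (‖g u‖ ^ 2 * φ u))) (volume.restrict Ω) := ((hfi.add hgi).const_mul _)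
  refine hb.mono' ?_ ?_
  · exact ((hf.mul hg).aestronglyMeasurable hΩ.measurableSet).mul
      ((Complex.measurable_ofReal.comp_aemeasurable hφm).aestronglyMeasurable)
  · refine Eventually.of_forall fun u => ?_
    have h1 : ‖f u * g u * ((φ u : ℝ) : ℂ)‖ = ‖f u‖ * ‖g u‖ * φ u := by
      simp [norm_mul, Complex.norm_real, _root_.abs_of_nonneg (hφ u)]
    rw [h1]
    have := hφ u
    have h2 := sq_nonneg (‖f u‖ - ‖g u‖)
    nlinarith [norm_nonneg (f u), norm_nonneg (g u), hφ u]


lemma bergman_decomp (Ω : Set ℂ) (hΩ : IsOpen Ω) (hconn : IsConnected Ω)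
    (φ : ℂ → ℝ) (hφ : ∀ z, 0 ≤ φ z)
    (Kφ : ℂ → ℂ → ℂ) (hKφ : IsBergmanKernel Ω φ Kφ)
    (c : ℂ) (hcΩ : c ∈ Ω) (hcc : Kφ c c ≠ 0)
    (K2 : ℂ → ℂ → ℂ)
    (hK2 : IsBergmanKernel Ω (fun z => ‖z - c‖ ^ 2 * φ z) K2)
    {z w : ℂ} (hz : z ∈ Ω) (hzc : z ≠ c) (hw : w ∈ Ω) (hwc : w ≠ c) :
    K2 z w = (Kφ z w - Kφ z c * Kφ c w / Kφ c c) / ((z - c) * conj (w - c)) := by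
  obtain ⟨hK2mem, hK2sym, hK2rep⟩ := hK2
  obtain ⟨hKmem, hKsym, hKrep⟩ := hKφ
  have hsymm : ∀ a ∈ Ω, ∀ b ∈ Ω, conj (Kφ a b) = Kφ b a := fun a ha b hb => by
    rw [hKsym b hb a ha]
  have hccc : conj (Kφ c c) = Kφ c c := hsymm c hcΩ c hcΩ
  have φmeas : AEMeasurable φ (volume.restrict Ω) :=
    phi_aemeasurable hΩ hconn (hKmem c hcΩ).1 hcΩ hcc (hKmem c hcΩ).2
  -- second-slot slices
  have contKz2 : ContinuousOn (fun u => Kφ z u) Ω :=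
    ContinuousOn.congr (Complex.continuous_conj.comp_continuousOn (hKmem z hz).1.continuousOn)
      (fun u hu => (hsymm u hu z hz).symm)
  have contKc2 : ContinuousOn (fun u => Kφ c u) Ω :=
    ContinuousOn.congr (Complex.continuous_conj.comp_continuousOn (hKmem c hcΩ).1.continuousOn)
      (fun u hu => (hsymm u hu c hcΩ).symm)
  have intKz2 : IntegrableOn (fun u => ‖Kφ z u‖ ^ 2 * φ u) Ω :=
    IntegrableOn.congr_fun (hKmem z hz).2
      (fun u hu => by rw [← hsymm u hu z hz, Complex.norm_conj]) hΩ.measurableSet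
  have intKc2 : IntegrableOn (fun u => ‖Kφ c u‖ ^ 2 * φ u) Ω :=
    IntegrableOn.congr_fun (hKmem c hcΩ).2
      (fun u hu => by rw [← hsymm u hu c hcΩ, Complex.norm_conj]) hΩ.measurableSet
  -- the function g
  have hgdiff : DifferentiableOn ℂ (fun u => (u - c) * K2 u w) Ω :=
    ((differentiable_id.sub_const c).differentiableOn).mul (hK2mem w hw).1
  have hgmem : MemA2 Ω φ (fun u => (u - c) * K2 u w) := by
    refine ⟨hgdiff, ?_⟩
    have : (fun u => ‖(u - c) * K2 u w‖ ^ 2 * φ u)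
        = fun u => ‖K2 u w‖ ^ 2 * (‖u - c‖ ^ 2 * φ u) := by
      funext u; rw [norm_mul]; ring
    rw [this]; exact (hK2mem w hw).2
  have hA : (z - c) * K2 z w = ∫ u in Ω, ((u - c) * K2 u w) * Kφ z u * ((φ u : ℝ) : ℂ) :=
    hKrep _ hgmem z hz
  have hB : (0 : ℂ) = ∫ u in Ω, ((u - c) * K2 u w) * Kφ c u * ((φ u : ℝ) : ℂ) := by
    have := hKrep _ hgmem c hcΩ
    simpa using this
  have hP1 : IntegrableOn (fun u => ((u - c) * K2 u w) * Kφ z u * ((φ u : ℝ) : ℂ)) Ω :=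
    integrable_pair hΩ hφ φmeas hgdiff.continuousOn contKz2 hgmem.2 intKz2
  have hP2 : IntegrableOn (fun u => ((u - c) * K2 u w) * Kφ c u * ((φ u : ℝ) : ℂ)) Ω :=
    integrable_pair hΩ hφ φmeas hgdiff.continuousOn contKc2 hgmem.2 intKc2
  set lam : ℂ := Kφ z c / Kφ c c with hlam
  have hcomb : (∫ u in Ω, (((u - c) * K2 u w) * Kφ z u * ((φ u : ℝ) : ℂ)
      - lam * (((u - c) * K2 u w) * Kφ c u * ((φ u : ℝ) : ℂ)))) = (z - c) * K2 z w := by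
    rw [integral_sub hP1 (hP2.const_mul lam), MeasureTheory.integral_const_mul, ← hA, ← hB, mul_zero, sub_zero]
  -- the function F = dslope N c
  set N : ℂ → ℂ := fun v => Kφ v z - Kφ v c * (Kφ c z / Kφ c c) with hN
  have hN0 : N c = 0 := by
    simp only [hN]
    field_simp
    ring
  have hNdiff : DifferentiableOn ℂ N Ω := (hKmem z hz).1.sub ((hKmem c hcΩ).1.mul_const _)
  have hFdiff : DifferentiableOn ℂ (dslope N c) Ω :=
    (Complex.differentiableOn_dslope (hΩ.mem_nhds hcΩ)).2 hNdiff
  have hFne : ∀ u : ℂ, u ≠ c → dslope N c u = N u / (u - c) := fun u hu => by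
    rw [dslope_of_ne _ hu, slope_def_field, hN0, sub_zero]
  have haec : ∀ᵐ (u : ℂ) ∂(volume.restrict Ω), u ≠ c := by
    refine ae_iff.2 ?_
    have h0 : (volume.restrict Ω) {c} = 0 := by
      rw [Measure.restrict_apply (measurableSet_singleton c)]
      exact le_antisymm (le_trans (measure_mono inter_subset_left) (by simp)) (zero_le)
    simpa [not_not] using h0
  have hGint : IntegrableOn (fun u => ‖N u‖ ^ 2 * φ u) Ω := by
    refine Integrable.mono'
      ((intKz2.const_mul 2).add (intKc2.const_mul (2 * ‖Kφ c z / Kφ c c‖ ^ 2))) ?_ ?_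
    · exact ((((continuous_norm.comp_continuousOn hNdiff.continuousOn).pow
        2).aemeasurable hΩ.measurableSet).mul φmeas).aestronglyMeasurable
    · filter_upwards [ae_restrict_mem (μ := volume) hΩ.measurableSet] with u huΩ
      simp only [Pi.add_apply]
      have ez : ‖Kφ z u‖ = ‖Kφ u z‖ := by
        rw [← hsymm u huΩ z hz, Complex.norm_conj]
      have ec : ‖Kφ c u‖ = ‖Kφ u c‖ := by
        rw [← hsymm u huΩ c hcΩ, Complex.norm_conj]
      rw [ez, ec]
      have h1 : ‖N u‖ ≤ ‖Kφ u z‖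
          + ‖Kφ u c‖ * ‖Kφ c z / Kφ c c‖ := by
        simpa [hN, norm_mul] using
          norm_sub_le (Kφ u z) (Kφ u c * (Kφ c z / Kφ c c))
      rw [Real.norm_eq_abs, _root_.abs_of_nonneg (mul_nonneg (by positivity) (hφ u))]
      have h2 := hφ u
      have h3 := norm_nonneg (N u)
      have h4 := norm_nonneg (Kφ u z)
      have h5 := norm_nonneg (Kφ u c)
      have h6 := norm_nonneg (Kφ c z / Kφ c c)
      have h7 : ‖N u‖ ^ 2 ≤ (‖Kφ u z‖
          + ‖Kφ u c‖ * ‖Kφ c z / Kφ c c‖) ^ 2 :=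
        pow_le_pow_left₀ h3 h1 2
      have h8 : 2 * (‖Kφ u z‖ * (‖Kφ u c‖ * ‖Kφ c z / Kφ c c‖))
          ≤ ‖Kφ u z‖ ^ 2
            + (‖Kφ u c‖ * ‖Kφ c z / Kφ c c‖) ^ 2 := by
        have := two_mul_le_add_sq (‖Kφ u z‖)
          (‖Kφ u c‖ * ‖Kφ c z / Kφ c c‖)
        linarith [this]
      nlinarith [mul_le_mul_of_nonneg_right h7 h2, mul_le_mul_of_nonneg_right h8 h2]
  have hae1 : (fun u => ‖N u‖ ^ 2 * φ u)
      =ᵐ[volume.restrict Ω] fun u => ‖dslope N c u‖ ^ 2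
        * (‖u - c‖ ^ 2 * φ u) := by
    filter_upwards [haec] with u hu
    rw [hFne u hu, norm_div]
    have habs : ‖u - c‖ ≠ 0 := norm_ne_zero_iff.mpr (sub_ne_zero.2 hu)
    field_simp
  have hFmem : MemA2 Ω (fun z => ‖z - c‖ ^ 2 * φ z) (dslope N c) :=
    ⟨hFdiff, hGint.congr hae1⟩
  have hrep : dslope N c w = ∫ u in Ω, dslope N c u * K2 w u
      * ((‖u - c‖ ^ 2 * φ u : ℝ) : ℂ) := hK2rep _ hFmem w hw
  have hconj : conj (dslope N c w) = ∫ u in Ω, conj (dslope N c u) * conj (K2 w u)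
      * ((‖u - c‖ ^ 2 * φ u : ℝ) : ℂ) := by
    rw [hrep, ← integral_conj]
    congr 1
    funext u
    simp [map_mul, Complex.conj_ofReal]
  have haeE : (fun u => conj (dslope N c u) * conj (K2 w u)
        * ((‖u - c‖ ^ 2 * φ u : ℝ) : ℂ))
      =ᵐ[volume.restrict Ω] fun u => (((u - c) * K2 u w) * Kφ z u * ((φ u : ℝ) : ℂ)
        - lam * (((u - c) * K2 u w) * Kφ c u * ((φ u : ℝ) : ℂ))) := by
    filter_upwards [ae_restrict_mem hΩ.measurableSet, haec] with u huΩ hu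
    have e1 : conj (K2 w u) = K2 u w := (hK2sym u huΩ w hw).symm
    have e2 : conj (N u) = Kφ z u - Kφ c u * lam := by
      simp only [hN, hlam, map_sub, map_mul, map_div₀, hsymm u huΩ z hz, hsymm u huΩ c hcΩ,
        hsymm c hcΩ z hz, hccc]
    have e3 : ((‖u - c‖ ^ 2 * φ u : ℝ) : ℂ) = (u - c) * conj (u - c) * (φ u : ℂ) := by
      rw [Complex.ofReal_mul, Complex.sq_norm, Complex.mul_conj]
    have hu' : (u - c) ≠ 0 := sub_ne_zero.2 hu
    have hu'' : conj (u - c) ≠ 0 := star_ne_zero.2 hu'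
    have hu3 : (starRingEnd ℂ) u - (starRingEnd ℂ) c ≠ 0 := by rw [← map_sub]; exact hu''
    rw [hFne u hu, map_div₀, e1, e2, e3]
    field_simp [hu3]
  have key : conj (dslope N c w) = (z - c) * K2 z w := by
    rw [hconj, integral_congr_ae haeE, hcomb]
  have e2w : conj (N w) = Kφ z w - Kφ c w * lam := by
    simp only [hN, hlam, map_sub, map_mul, map_div₀, hsymm w hw z hz, hsymm w hw c hcΩ,
      hsymm c hcΩ z hz, hccc]
  rw [hFne w hwc, map_div₀, e2w] at key
  have hz' : (z - c) ≠ 0 := sub_ne_zero.2 hzc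
  have hw' : conj (w - c) ≠ 0 := star_ne_zero.2 (sub_ne_zero.2 hwc)
  rw [hlam] at key
  have hw3 : (starRingEnd ℂ) w - (starRingEnd ℂ) c ≠ 0 := by rw [← map_sub]; exact hw'
  rw [eq_div_iff (mul_ne_zero hz' hw')]
  field_simp [hw3] at key ⊢
  linear_combination (-1 : ℂ) * key

theorem stmt_13 (Ω : Set ℂ) (hΩ : IsOpen Ω) (hconn : IsConnected Ω)
    (φ : ℂ → ℝ) (hφ : ∀ z, 0 ≤ φ z)
    (p₀ : ℂ) (hp₀ : p₀ ∈ frontier Ω)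
    (p : ℕ → ℂ) (hpΩ : ∀ j, p j ∈ Ω) (hptend : Tendsto p atTop (nhds p₀))
    (Kφ : ℂ → ℂ → ℂ) (hKφ : IsBergmanKernel Ω φ Kφ)
    (hpos : ∀ j, 0 < (Kφ (p j) (p j)).re)
    (hreal : ∀ j, (Kφ (p j) (p j)).im = 0)
    (hconv : TendstoLocallyUniformlyOn
      (fun j z => Kφ z (p j) / (Real.sqrt ((Kφ (p j) (p j)).re) : ℂ))
      (fun _ => 0) atTop Ω)
    (c : ℂ) (hcΩ : c ∈ Ω) (hcc : Kφ c c ≠ 0) (hccpos : 0 < (Kφ c c).re)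
    (hCS : ∀ j, ‖Kφ (p j) c‖ ^ 2 < (Kφ (p j) (p j)).re * (Kφ c c).re)
    (K2 : ℂ → ℂ → ℂ)
    (hK2 : IsBergmanKernel Ω (fun z => ‖z - c‖ ^ 2 * φ z) K2)
    (hpos2 : ∀ j, 0 < (K2 (p j) (p j)).re)
    (hreal2 : ∀ j, (K2 (p j) (p j)).im = 0) :
    TendstoLocallyUniformlyOn
      (fun j z => K2 z (p j) / (Real.sqrt ((K2 (p j) (p j)).re) : ℂ))
      (fun _ => 0) atTop (Ω \ {c}) := by
  have hsymm : ∀ a ∈ Ω, ∀ b ∈ Ω, conj (Kφ a b) = Kφ b a := fun a ha b hb => by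
    rw [hKφ.2.1 b hb a ha]
  set b := (Kφ c c).re with hbdef
  have hb : 0 < b := hccpos
  have hKcc : Kφ c c = (b : ℂ) := (Complex.conj_eq_iff_re.1 (hsymm c hcΩ c hcΩ)).symm
  have hp0 : p₀ ∉ Ω := by
    rw [hΩ.frontier_eq] at hp₀; exact hp₀.2
  have hpc : p₀ ≠ c := fun h => hp0 (h ▸ hcΩ)
  have hev_ne : ∀ᶠ j in atTop, p j ≠ c := hptend.eventually_ne hpc
  have hform : ∀ j, p j ≠ c → ∀ z ∈ Ω, z ≠ c →
      K2 z (p j) = (Kφ z (p j) - Kφ z c * Kφ c (p j) / Kφ c c)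
        / ((z - c) * conj (p j - c)) :=
    fun j hj z hzΩ hzc => bergman_decomp Ω hΩ hconn φ hφ Kφ hKφ c hcΩ hcc K2 hK2 hzΩ hzc (hpΩ j) hj
  have hdiag : ∀ j, p j ≠ c → (K2 (p j) (p j)).re
      = ((Kφ (p j) (p j)).re - ‖Kφ (p j) c‖ ^ 2 / b) / ‖p j - c‖ ^ 2 := by
    intro j hj
    have h1 := hform j hj (p j) (hpΩ j) hj
    have hKpp : Kφ (p j) (p j) = ((Kφ (p j) (p j)).re : ℂ) := by
      apply Complex.ext <;> simp [hreal j]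
    have h2 : Kφ (p j) c * Kφ c (p j) = ((‖Kφ (p j) c‖ ^ 2 : ℝ) : ℂ) := by
      rw [← hsymm (p j) (hpΩ j) c hcΩ, Complex.mul_conj, Complex.sq_norm]
    have h3 : (p j - c) * conj (p j - c) = ((‖p j - c‖ ^ 2 : ℝ) : ℂ) := by
      rw [Complex.mul_conj, Complex.sq_norm]
    rw [h1, h2, h3, hKcc]
    conv_lhs => rw [hKpp]
    have h4 : (((Kφ (p j) (p j)).re : ℂ) - ((‖Kφ (p j) c‖ ^ 2 : ℝ) : ℂ) / (b : ℂ))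
        / ((‖p j - c‖ ^ 2 : ℝ) : ℂ)
        = ((((Kφ (p j) (p j)).re - ‖Kφ (p j) c‖ ^ 2 / b)
          / ‖p j - c‖ ^ 2 : ℝ) : ℂ) := by
      push_cast; ring
    rw [h4, Complex.ofReal_re]
  rw [tendstoLocallyUniformlyOn_iff_forall_isCompact (hΩ.sdiff isClosed_singleton)]
  intro K hKsub hK
  rcases K.eq_empty_or_nonempty with rfl | hne
  · exact tendstoUniformlyOn_empty
  obtain ⟨C, hC⟩ := hK.exists_bound_of_continuousOn
    ((hKφ.1 c hcΩ).1.continuousOn.mono (hKsub.trans diff_subset))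
  obtain ⟨x₀, hx₀⟩ := hne
  have hC0 : 0 ≤ C := le_trans (norm_nonneg _) (hC x₀ hx₀)
  obtain ⟨z₀, hz₀K, hz₀min'⟩ := hK.exists_isMinOn ⟨x₀, hx₀⟩
    (f := fun z => ‖z - c‖) ((continuous_id.sub continuous_const).norm.continuousOn)
  have hz₀min : ∀ y ∈ K, ‖z₀ - c‖ ≤ ‖y - c‖ := fun y hy => hz₀min' hy
  set δ := ‖z₀ - c‖ with hδdef
  have hδ : 0 < δ := by
    have hz0 : z₀ ≠ c := fun h => (hKsub hz₀K).2 (by simp [h])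
    simpa [hδdef] using sub_ne_zero.2 hz0
  have hUK : TendstoUniformlyOn
      (fun j z => Kφ z (p j) / (Real.sqrt ((Kφ (p j) (p j)).re) : ℂ)) (fun _ => 0) atTop K :=
    (tendstoLocallyUniformlyOn_iff_forall_isCompact hΩ).1 hconv K (hKsub.trans diff_subset) hK
  have hUc : Tendsto (fun j => Kφ c (p j) / (Real.sqrt ((Kφ (p j) (p j)).re) : ℂ)) atTop (𝓝 0) :=
    hconv.tendsto_at hcΩ
  rw [Metric.tendstoUniformlyOn_iff] at hUK ⊢
  intro ε hε
  set η := min (Real.sqrt (b / 2)) (ε * δ / (2 * (1 + C / b))) with hηdef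
  have hCb : 0 < 1 + C / b := by positivity
  have hη : 0 < η := lt_min (Real.sqrt_pos.2 (by positivity)) (by positivity)
  have e2 : ∀ᶠ j in atTop,
      dist (Kφ c (p j) / (Real.sqrt ((Kφ (p j) (p j)).re) : ℂ)) 0 < η :=
    (Metric.tendsto_nhds.1 hUc) η hη
  filter_upwards [hUK η hη, e2, hev_ne] with j h1 h2 h3
  intro z hzK
  have hzΩ : z ∈ Ω := (hKsub hzK).1
  have hzc : z ≠ c := fun h => (hKsub hzK).2 (by simp [h])
  set a := (Kφ (p j) (p j)).re with hadef
  have ha : 0 < a := hpos j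
  set s := Real.sqrt a with hsdef
  have hs : 0 < s := Real.sqrt_pos.2 ha
  set d := Kφ (p j) c with hddef
  have hdc : Kφ c (p j) = conj d := (hsymm (p j) (hpΩ j) c hcΩ).symm
  have hsC : ‖((s : ℝ) : ℂ)‖ = s := by
    rw [Complex.norm_real, Real.norm_eq_abs, abs_of_pos hs]
  have hX : ‖Kφ z (p j)‖ < η * s := by
    have h5 := h1 z hzK
    simp only [dist_zero_left, norm_div, hsC] at h5
    rw [div_lt_iff₀ hs] at h5
    exact h5
  have hT : ‖d‖ < η * s := by
    simp only [dist_zero_right, norm_div, hsC] at h2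
    rw [div_lt_iff₀ hs, hdc, RCLike.norm_conj] at h2
    exact h2
  have hTb : ‖d‖ ≤ Real.sqrt (b / 2) * s :=
    le_trans hT.le (mul_le_mul_of_nonneg_right (min_le_left _ _) hs.le)
  set q := a - ‖d‖ ^ 2 / b with hqdef
  have habs_d : ‖d‖ = ‖d‖ := rfl
  have hsq2 : s ^ 2 = a := Real.sq_sqrt ha.le
  have hq2 : a / 2 ≤ q := by
    have h4 : ‖d‖ ^ 2 ≤ (b / 2) * a := by
      have h5 : Real.sqrt (b / 2) ^ 2 = b / 2 := Real.sq_sqrt (by positivity)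
      nlinarith [mul_le_mul hTb hTb (norm_nonneg d) (by positivity : (0:ℝ) ≤ Real.sqrt (b/2) * s)]
    have h6 : ‖d‖ ^ 2 / b ≤ a / 2 := by
      rw [div_le_iff₀ hb]; linarith
    rw [hqdef, habs_d]; linarith
  have hq : 0 < q := lt_of_lt_of_le (by positivity) hq2
  have hsq : s / 2 < Real.sqrt q := by
    have h7 : (s / 2) ^ 2 < q := by nlinarith
    calc s / 2 = Real.sqrt ((s / 2) ^ 2) := (Real.sqrt_sq (by positivity)).symm
    _ < Real.sqrt q := Real.sqrt_lt_sqrt (by positivity) h7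
  have hr : (K2 (p j) (p j)).re = q / ‖p j - c‖ ^ 2 := hdiag j h3
  set m := ‖p j - c‖ with hmdef
  have hm : 0 < m := norm_pos_iff.2 (sub_ne_zero.2 h3)
  have hsqrtr : Real.sqrt ((K2 (p j) (p j)).re) = Real.sqrt q / m := by
    rw [hr, Real.sqrt_div hq.le, Real.sqrt_sq hm.le]
  have hK2z := hform j h3 z hzΩ hzc
  have hnum : ‖Kφ z (p j) - Kφ z c * Kφ c (p j) / Kφ c c‖ < η * s * (1 + C / b) := by
    have hKzc : ‖Kφ z c‖ ≤ C := hC z hzK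
    have hbC : ‖(Kφ c c : ℂ)‖ = b := by
      rw [hKcc, Complex.norm_real, Real.norm_eq_abs, abs_of_pos hb]
    calc ‖Kφ z (p j) - Kφ z c * Kφ c (p j) / Kφ c c‖
        ≤ ‖Kφ z (p j)‖ + ‖Kφ z c‖ * ‖Kφ c (p j)‖ / b := by
          have := norm_sub_le (Kφ z (p j)) (Kφ z c * Kφ c (p j) / Kφ c c)
          rw [norm_div, norm_mul, hbC] at this
          exact this
      _ = ‖Kφ z (p j)‖ + ‖Kφ z c‖ * ‖d‖ / b := by rw [hdc, RCLike.norm_conj]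
      _ < η * s + C * (η * s) / b := by
          have h8 : ‖Kφ z c‖ * ‖d‖ / b ≤ C * (η * s) / b := by
            gcongr
          exact add_lt_add_of_lt_of_le hX h8
      _ = η * s * (1 + C / b) := by field_simp
  have hden : δ * (s / 2) ≤ ‖z - c‖ * Real.sqrt q := by
    apply mul_le_mul (hz₀min z hzK) hsq.le (by positivity) (norm_nonneg _)
  have hnorm : ‖K2 z (p j) / ((Real.sqrt ((K2 (p j) (p j)).re) : ℝ) : ℂ)‖
      = ‖Kφ z (p j) - Kφ z c * Kφ c (p j) / Kφ c c‖ / (‖z - c‖ * Real.sqrt q) := by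
    rw [hK2z, hsqrtr, norm_div, norm_div, norm_mul]
    have e1 : ‖conj (p j - c)‖ = m := by rw [RCLike.norm_conj]
    have e2 : ‖((Real.sqrt q / m : ℝ) : ℂ)‖ = Real.sqrt q / m := by
      rw [Complex.norm_real, Real.norm_eq_abs, abs_of_pos (by positivity)]
    rw [e1, e2, div_div]
    congr 1
    field_simp
  rw [dist_zero_left, hnorm]
  calc ‖Kφ z (p j) - Kφ z c * Kφ c (p j) / Kφ c c‖ / (‖z - c‖ * Real.sqrt q)
      < (η * s * (1 + C / b)) / (δ * (s / 2)) :=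
        div_lt_div₀ hnum hden (by positivity) (by positivity)
    _ = 2 * η * (1 + C / b) / δ := by field_simp
    _ ≤ ε := by
        rw [div_le_iff₀ hδ]
        have h9 : η ≤ ε * δ / (2 * (1 + C / b)) := min_le_right _ _
        have h10 : 2 * η * (1 + C / b) ≤ 2 * (ε * δ / (2 * (1 + C / b))) * (1 + C / b) := by
          gcongr
        have h11 : 2 * (ε * δ / (2 * (1 + C / b))) * (1 + C / b) = ε * δ := by
          field_simp
        linarith
end
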